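/- arXiv:2507.10508 — 4 statements merged into one kernel-verified Lean document; each statement's English description precedes it below -/
import Mathlib

section
/- Let m1 ≤ m2 and m1' ≤ m2' be integers ≥ 2 such that gcd(m1,m2) = gcd(m1',m2') and 1/m1 + 1/m2 = 1/m1' + 1/m2' (as rational numbers). Then m1 = m1' and m2 = m2'. -/
/-!
Write `d = gcd(m₁, m₂) = gcd(m₁', m₂')` and `mᵢ = d aᵢ`, `mᵢ' = d aᵢ'`. Clearing denominators,
`1/m₁ + 1/m₂ = 1/m₁' + 1/m₂'` becomes `a₁' a₂' (a₁ + a₂) = a₁ a₂ (a₁' + a₂')`. Since `a₁ a₂` is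
coprime to `a₁ + a₂` (and likewise for the primed pair), each product divides the other, so the
two pairs have the same product and the same sum, hence are the same unordered pair.
-/

theorem IsCoprime.mul_add {R : Type*} [CommRing R] {a b : R} (h : IsCoprime a b) :
    IsCoprime (a * b) (a + b) := by
  have ha : IsCoprime a (b + a * 1) := h.add_mul_left_right 1
  have hb : IsCoprime b (a + b * 1) := h.symm.add_mul_left_right 1
  rw [mul_one, add_comm] at ha
  rw [mul_one] at hb
  exact ha.mul_left hb

theorem eq_and_eq_of_add_eq_of_mul_eq {R : Type*} [CommRing R] [IsDomain R] [PartialOrder R]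
    {x y x' y' : R} (hxy : x ≤ y) (hxy' : x' ≤ y')
    (hadd : x + y = x' + y') (hmul : x * y = x' * y') : x = x' ∧ y = y' := by
  have hroots : (x - x') * (x - y') = 0 := by linear_combination x * hadd - hmul
  rcases mul_eq_zero.mp hroots with h | h
  · have hx : x = x' := sub_eq_zero.mp h
    exact ⟨hx, by rw [hx] at hadd; exact add_left_cancel hadd⟩
  · have hx : x = y' := sub_eq_zero.mp h
    have hy : y = x' := by rw [hx, add_comm x'] at hadd; exact add_left_cancel hadd
    have hxx' : x = x' := le_antisymm (hy ▸ hxy) (hx ▸ hxy')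
    exact ⟨hxx', hy.trans (hxx'.symm.trans hx)⟩

theorem Int.mul_eq_and_add_eq_of_mul_mul_add_eq {a b a' b' : ℤ}
    (ha : 0 < a) (hb : 0 < b) (ha' : 0 < a') (hb' : 0 < b')
    (hab : IsCoprime a b) (hab' : IsCoprime a' b')
    (h : a' * b' * (a + b) = a * b * (a' + b')) : a * b = a' * b' ∧ a + b = a' + b' := by
  have hmul : a * b = a' * b' := by
    refine Int.dvd_antisymm (by positivity) (by positivity) ?_ ?_
    · exact hab.mul_add.dvd_of_dvd_mul_right ⟨a' + b', by rw [h, mul_comm]⟩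
    · exact hab'.mul_add.dvd_of_dvd_mul_right ⟨a + b, by rw [← h, mul_comm]⟩
  exact ⟨hmul, mul_left_cancel₀ (by positivity : a * b ≠ 0) (by rwa [← hmul] at h)⟩

theorem Int.add_eq_and_mul_eq_of_gcd_eq {m₁ m₂ m₁' m₂' : ℤ}
    (h₁ : 0 < m₁) (h₂ : 0 < m₂) (h₁' : 0 < m₁') (h₂' : 0 < m₂')
    (hgcd : Int.gcd m₁ m₂ = Int.gcd m₁' m₂')
    (h : m₁' * m₂' * (m₁ + m₂) = m₁ * m₂ * (m₁' + m₂')) :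
    m₁ + m₂ = m₁' + m₂' ∧ m₁ * m₂ = m₁' * m₂' := by
  have hd : 0 < Int.gcd m₁ m₂ := Int.gcd_pos_of_ne_zero_left _ h₁.ne'
  obtain ⟨a, b, hab, e₁, e₂⟩ := Int.exists_gcd_one hd
  obtain ⟨a', b', hab', e₁', e₂'⟩ := Int.exists_gcd_one (hgcd ▸ hd)
  rw [← hgcd] at e₁' e₂'
  have hd' : (0 : ℤ) < Int.gcd m₁ m₂ := by exact_mod_cast hd
  generalize ((Int.gcd m₁ m₂ : ℕ) : ℤ) = d at e₁ e₂ e₁' e₂' hd'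
  subst e₁ e₂ e₁' e₂'
  obtain ⟨hmul, hadd⟩ := Int.mul_eq_and_add_eq_of_mul_mul_add_eq
    (pos_of_mul_pos_left h₁ hd'.le) (pos_of_mul_pos_left h₂ hd'.le)
    (pos_of_mul_pos_left h₁' hd'.le) (pos_of_mul_pos_left h₂' hd'.le)
    (Int.isCoprime_iff_gcd_eq_one.mpr hab) (Int.isCoprime_iff_gcd_eq_one.mpr hab')
    (mul_left_cancel₀ (pow_ne_zero 3 hd'.ne') (by linear_combination h))
  exact ⟨by linear_combination d * hadd, by linear_combination d ^ 2 * hmul⟩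

theorem mul_mul_add_eq_of_one_div_add_one_div_eq {K : Type*} [Field K] {x y x' y' : K}
    (hx : x ≠ 0) (hy : y ≠ 0) (hx' : x' ≠ 0) (hy' : y' ≠ 0)
    (h : 1 / x + 1 / y = 1 / x' + 1 / y') : x' * y' * (x + y) = x * y * (x' + y') := by
  field_simp at h
  linear_combination h

theorem stmt_1 (m1 m2 m1' m2' : ℤ) (hm1 : 2 ≤ m1) (hm1' : 2 ≤ m1')
    (h12 : m1 ≤ m2) (h12' : m1' ≤ m2')
    (hgcd : Int.gcd m1 m2 = Int.gcd m1' m2')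
    (hsum : (1 : ℚ) / (m1 : ℚ) + 1 / (m2 : ℚ) = 1 / (m1' : ℚ) + 1 / (m2' : ℚ)) :
    m1 = m1' ∧ m2 = m2' := by
  have h1 : 0 < m1 := by omega
  have h2 : 0 < m2 := by omega
  have h1' : 0 < m1' := by omega
  have h2' : 0 < m2' := by omega
  have hcross : m1' * m2' * (m1 + m2) = m1 * m2 * (m1' + m2') := by
    exact_mod_cast mul_mul_add_eq_of_one_div_add_one_div_eq (by positivity) (by positivity)
      (by positivity) (by positivity) hsum
  obtain ⟨hadd, hmul⟩ := Int.add_eq_and_mul_eq_of_gcd_eq h1 h2 h1' h2' hgcd hcross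
  exact eq_and_eq_of_add_eq_of_mul_eq h12 h12' hadd hmul
end

section
/- Let G be an infinite group satisfying property NINF, and let 1 → A → B → C → 1 be a short exact sequence of groups with A finitely generated and C infinite. Suppose the epimorphism φ: B → C factors as φ = ρ ∘ ψ where ψ: B → G is surjective and ρ: G → C is a homomorphism. Then ρ is an isomorphism. -/
/-- A group satisfies property NINF if every nontrivial normal subgroup of
infinite index is not finitely generated. -/
def NINF (G : Type*) [Group G] : Prop :=
  ∀ N : Subgroup G, N.Normal → N ≠ ⊥ → N.index = 0 → ¬ N.FG

theorem stmt_11 {B C G : Type*} [Group B] [Group C] [Group G]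
    [Infinite G] (hG : NINF G) [Infinite C]
    (φ : B →* C) (hφ : Function.Surjective φ) (hA : φ.ker.FG)
    (ψ : B →* G) (hψ : Function.Surjective ψ) (ρ : G →* C)
    (hfac : φ = ρ.comp ψ) :
    Function.Bijective ρ := by
  have hρsurj : Function.Surjective ρ := by
    intro c
    obtain ⟨b, hb⟩ := hφ c
    exact ⟨ψ b, by rw [hfac] at hb; exact hb⟩
  -- ker ρ = image of ker φ under ψ
  have hker : (φ.ker).map ψ = ρ.ker := by
    rw [hfac, ← MonoidHom.comap_ker, Subgroup.map_comap_eq_self_of_surjective hψ]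
  have hfg : ρ.ker.FG := by
    classical
    obtain ⟨S, hS⟩ := hA
    exact ⟨S.image ψ, by rw [Finset.coe_image, ← MonoidHom.map_closure, hS, hker]⟩
  have hidx : ρ.ker.index = 0 := by
    rw [Subgroup.index_ker, MonoidHom.range_eq_top.mpr hρsurj,
      Nat.card_congr Subgroup.topEquiv.toEquiv]
    exact Nat.card_eq_zero_of_infinite
  have hbot : ρ.ker = ⊥ := by
    by_contra h
    exact hG ρ.ker inferInstance h hidx hfg
  exact ⟨(MonoidHom.ker_eq_bot_iff ρ).mp hbot, hρsurj⟩
end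

section
/- Let G be an infinite group and N a normal subgroup of G of finite index such that: (i) N satisfies property NINF, and (ii) every nontrivial normal subgroup H of G satisfies N ∩ H ≠ {1}. Then G satisfies property NINF. -/
theorem stmt_12 {G : Type*} [Group G] [Infinite G] (N : Subgroup G)
    (hN : N.Normal) (hfin : N.index ≠ 0) (hninf : NINF N)
    (hint : ∀ H : Subgroup G, H.Normal → H ≠ ⊥ → N ⊓ H ≠ ⊥) :
    NINF G := by
  intro H hH hHne hHidx hHfg
  set M : Subgroup G := N ⊓ H with hM
  have hMne : M ≠ ⊥ := hint H hH hHne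
  have hMH : M ≤ H := inf_le_right
  have hMN : M ≤ N := inf_le_left
  -- M has index 0 in G
  have hMidx : M.index = 0 := by
    have := Subgroup.index_dvd_of_le hMH
    rw [hHidx] at this
    exact Nat.eq_zero_of_zero_dvd this
  -- K := M as a subgroup of N
  set K : Subgroup N := M.subgroupOf N with hK
  have hMnorm : M.Normal := @Subgroup.normal_inf_normal _ _ N H hN hH
  have hKnormal : K.Normal := hMnorm.subgroupOf N
  have hKne : K ≠ ⊥ := by
    rw [hK, Ne, Subgroup.subgroupOf_eq_bot]
    intro hdis
    exact hMne (le_bot_iff.mp (le_trans (le_inf le_rfl hMN) hdis.le_bot))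
  have hKidx : K.index = 0 := by
    have h1 : M.relIndex N * N.index = M.index := Subgroup.relIndex_mul_index hMN
    rw [hMidx] at h1
    have : M.relIndex N = 0 := by
      rcases Nat.mul_eq_zero.mp h1 with h | h
      · exact h
      · exact absurd h hfin
    exact this
  -- K is finitely generated
  have hKfg : K.FG := by
    rw [← Group.fg_iff_subgroup_fg]
    -- H is f.g. as a group
    have hHgrp : Group.FG H := (Group.fg_iff_subgroup_fg H).mpr hHfg
    -- N.subgroupOf H has finite index in H
    have hrel : N.relIndex H ≠ 0 := fun h =>
      hfin (Nat.eq_zero_of_zero_dvd (h ▸ Subgroup.relIndex_dvd_index_of_normal N H))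
    haveI : (N.subgroupOf H).FiniteIndex := ⟨hrel⟩
    haveI : Group.FG (N.subgroupOf H) := Subgroup.fg_of_index_ne_zero _
    -- N.subgroupOf H = M.subgroupOf H, which is iso to M, which is iso to K
    have e1 : N.subgroupOf H = M.subgroupOf H := by
      rw [hM, Subgroup.inf_subgroupOf_right]
    rw [e1] at this
    have e2 : (M.subgroupOf H) ≃* M := Subgroup.subgroupOfEquivOfLe hMH
    have e3 : K ≃* M := Subgroup.subgroupOfEquivOfLe hMN
    exact Group.fg_of_surjective (f := (e3.symm.toMonoidHom.comp e2.toMonoidHom))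
      (e3.symm.surjective.comp e2.surjective)
  exact hninf K hKnormal hKne hKidx hKfg
end

section
/- Every finitely generated residually finite group is Hopfian. -/
/-!
Malcev's argument. Since `G` is finitely generated, there are only finitely many homomorphisms
from `G` to a fixed finite group `F`. Precomposition with a surjective endomorphism `f` is an
injective self-map of this finite set, hence a bijection, so every `φ : G →* F` factors through
`f` and kills `ker f`. Residual finiteness then forces `ker f` to be trivial.
-/

/-- A group is residually finite if every nontrivial element survives in some
finite quotient. -/
def ResiduallyFinite (G : Type*) [Group G] : Prop :=
  ∀ g : G, g ≠ 1 → ∃ (F : Type) (_ : Group F), Finite F ∧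
    ∃ φ : G →* F, φ g ≠ 1

namespace MonoidHom

theorem finite_of_fg (M N : Type*) [Monoid M] [Monoid.FG M] [Monoid N] [Finite N] :
    Finite (M →* N) := by
  obtain ⟨S, hS⟩ := Monoid.FG.fg_top (M := M)
  refine Finite.of_injective (fun φ : M →* N => fun s : S => φ s) fun φ ψ h => ?_
  exact eq_of_eqOn_denseM hS fun x hx => congrFun h ⟨x, hx⟩

theorem exists_comp_eq_of_surjective {M P : Type*} [Monoid M] [Monoid P] [Finite (M →* P)]
    {f : M →* M} (hf : Function.Surjective f) (φ : M →* P) : ∃ χ : M →* P, χ.comp f = φ :=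
  Finite.surjective_of_injective (fun _ _ h => (cancel_right hf).mp h) φ

end MonoidHom

theorem stmt_15 {G : Type*} [Group G] (hfg : Group.FG G)
    (hrf : ResiduallyFinite G) :
    ∀ f : G →* G, Function.Surjective f → Function.Injective f := by
  intro f hf
  rw [injective_iff_map_eq_one]
  intro g hg
  by_contra hne
  obtain ⟨F, _, _, φ, hφ⟩ := hrf g hne
  have := MonoidHom.finite_of_fg G F
  obtain ⟨χ, rfl⟩ := MonoidHom.exists_comp_eq_of_surjective hf φ
  exact hφ (by rw [MonoidHom.comp_apply, hg, map_one])
end
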